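/- arXiv:0803.3768 — 3 statements merged into one kernel-verified Lean document; each statement's English description precedes it below -/
import Mathlib

section
/- For any positive integers a, N: S_{a,a,a,a}(N) = (S_a(N)⁴ + 6·S_a(N)²·S_{2a}(N) + 3·S_{2a}(N)² + 8·S_a(N)·S_{3a}(N) + 6·S_{4a}(N))/24. -/
/-!
With `x_n = n^(-a)`, the nesting in `S` is non-strict, so `S_{a,…,a}(N)` with `r` indices is the
complete homogeneous symmetric polynomial `h_r(x_1, …, x_N)`, and `S_{ja}(N)` is the power sum `p_j`.
The theorem is the expansion of `h_4` in power sums. Adjoining the variable `x_{N+1}` gives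
`h_r(N + 1) = h_r(N) + x_{N+1} h_{r-1}(N + 1)`, so the expansions of `h_2`, `h_3`, `h_4` follow in turn
by induction on `N`, each from the previous one evaluated at `N + 1`.
-/

/-- Nested harmonic sums `S_{a₁,…,a_r}(N)` with positive integer indices. -/
noncomputable def S : List ℕ → ℕ → ℝ
  | [], _ => 1
  | a :: l, N => ∑ n ∈ Finset.Icc 1 N, (1 / (n : ℝ) ^ a) * S l n

@[simp]
lemma S_nil (N : ℕ) : S [] N = 1 := rfl

@[simp]
lemma S_cons_zero (b : ℕ) (l : List ℕ) : S (b :: l) 0 = 0 := by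
  simp [S]

@[simp]
lemma S_cons_succ (b : ℕ) (l : List ℕ) (N : ℕ) :
    S (b :: l) (N + 1) = S (b :: l) N + 1 / ((N + 1 : ℕ) : ℝ) ^ b * S l (N + 1) := by
  simp only [S]
  rw [Finset.sum_Icc_succ_top (by omega)]

lemma S_pair (a N : ℕ) : S [a, a] N = (S [a] N ^ 2 + S [2 * a] N) / 2 := by
  induction N with
  | zero => simp
  | succ N ih =>
    rw [S_cons_succ, ih]
    simp only [S_cons_succ, S_nil]
    ring

lemma S_triple (a N : ℕ) :
    S [a, a, a] N = (S [a] N ^ 3 + 3 * S [a] N * S [2 * a] N + 2 * S [3 * a] N) / 6 := by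
  induction N with
  | zero => simp
  | succ N ih =>
    rw [S_cons_succ, S_pair, ih]
    simp only [S_cons_succ, S_nil]
    ring

theorem stmt_4_general (a N : ℕ) :
    S [a, a, a, a] N
      = (S [a] N ^ 4 + 6 * S [a] N ^ 2 * S [2 * a] N + 3 * S [2 * a] N ^ 2
          + 8 * S [a] N * S [3 * a] N + 6 * S [4 * a] N) / 24 := by
  induction N with
  | zero => simp
  | succ N ih =>
    rw [S_cons_succ, S_triple, ih]
    simp only [S_cons_succ, S_nil]
    ring

/-- `S_{a,a,a,a}(N) = (S_a⁴ + 6·S_a²·S_{2a} + 3·S_{2a}² + 8·S_a·S_{3a} + 6·S_{4a})/24`. -/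
theorem stmt_4 (a N : ℕ) (ha : 1 ≤ a) (hN : 1 ≤ N) :
    S [a, a, a, a] N
      = (S [a] N ^ 4 + 6 * S [a] N ^ 2 * S [2 * a] N + 3 * S [2 * a] N ^ 2
          + 8 * S [a] N * S [3 * a] N + 6 * S [4 * a] N) / 24 :=
  stmt_4_general a N
end

section
/- The general shuffle relation holds: for positive integer multi-indices (a₁,…,aₙ) and (b₁,…,bₘ) and all N ≥ 1, S_{a₁,…,aₙ}(N)·S_{b₁,…,bₘ}(N) = ∑_{ℓ=1}^N ℓ^(-a₁) S_{a₂,…,aₙ}(ℓ) S_{b₁,…,bₘ}(ℓ) + ∑_{ℓ=1}^N ℓ^(-b₁) S_{a₁,…,aₙ}(ℓ) S_{b₂,…,bₘ}(ℓ) - ∑_{ℓ=1}^N ℓ^(-(a₁+b₁)) S_{a₂,…,aₙ}(ℓ) S_{b₂,…,bₘ}(ℓ). -/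
/-- The square `[1, N]²` splits into the triangles `k ≤ l` and `l ≤ k`, which overlap on the
diagonal. -/
theorem Finset.sum_Icc_mul_sum_Icc {R : Type*} [CommRing R] (f g : ℕ → R) (N : ℕ) :
    (∑ l ∈ Icc 1 N, f l) * (∑ l ∈ Icc 1 N, g l)
      = (∑ l ∈ Icc 1 N, f l * ∑ k ∈ Icc 1 l, g k)
        + (∑ l ∈ Icc 1 N, (∑ k ∈ Icc 1 l, f k) * g l)
        - ∑ l ∈ Icc 1 N, f l * g l := by
  induction N with
  | zero => simp
  | succ n ih =>
    simp only [sum_Icc_succ_top (Nat.le_add_left 1 n)]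
    linear_combination ih

theorem stmt_5_general (a b : ℕ) (as bs : List ℕ) (N : ℕ) :
    S (a :: as) N * S (b :: bs) N
      = (∑ l ∈ Finset.Icc 1 N, (1 / (l : ℝ) ^ a) * S as l * S (b :: bs) l)
        + (∑ l ∈ Finset.Icc 1 N, (1 / (l : ℝ) ^ b) * S (a :: as) l * S bs l)
        - ∑ l ∈ Finset.Icc 1 N, (1 / (l : ℝ) ^ (a + b)) * S as l * S bs l := by
  rw [S, S, Finset.sum_Icc_mul_sum_Icc]
  congr 1; congr 1
  all_goals refine Finset.sum_congr rfl fun l _ => ?_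
  · rw [S]; ring
  · rw [pow_add]; ring

/-- General shuffle relation for nested harmonic sums. -/
theorem stmt_5 (a b : ℕ) (as bs : List ℕ) (N : ℕ)
    (ha : 1 ≤ a) (hb : 1 ≤ b)
    (has : ∀ i ∈ as, 1 ≤ i) (hbs : ∀ i ∈ bs, 1 ≤ i) (hN : 1 ≤ N) :
    S (a :: as) N * S (b :: bs) N
      = (∑ l ∈ Finset.Icc 1 N, (1 / (l : ℝ) ^ a) * S as l * S (b :: bs) l)
        + (∑ l ∈ Finset.Icc 1 N, (1 / (l : ℝ) ^ b) * S (a :: as) l * S bs l)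
        - ∑ l ∈ Finset.Icc 1 N, (1 / (l : ℝ) ^ (a + b)) * S as l * S bs l :=
  stmt_5_general a b as bs N
end

section
/- If the kernel 𝒫 satisfies γ(N) = 𝒫(N + γ(N)/2) and γ decomposes as γ = γ₊ + γ₋ with γ₊ = ∑_{k≥0} (1/(2k+1)!)((1/2)∂)^{2k}[𝒫]^{2k+1} and γ₋ = ∑_{k≥1} (1/(2k)!)((1/2)∂)^{2k−1}[𝒫]^{2k}, then order by order in the formal coupling: γ₋,₁ = 0, γ₋,₂ = (1/4)(γ₊,₁²)′, γ₋,₃ = (1/2)(γ₊,₁γ₊,₂)′, and γ₋,₄ = (1/4)(γ₊,₂² + 2γ₊,₁γ₊,₃)′ + (1/48)(−γ₊,₁(γ₊,₁³)″ + (1/4)(γ₊,₁⁴)″)′. -/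
/-- Coefficientwise derivative `∂/∂N` on formal power series whose coefficients
are functions of `N`. -/
noncomputable def D (f : PowerSeries (ℝ → ℝ)) : PowerSeries (ℝ → ℝ) :=
  PowerSeries.mk fun n => deriv (PowerSeries.coeff (R := ℝ → ℝ) n f)

open PowerSeries

lemma aux_coeff_D_iter (j n : ℕ) (f : PowerSeries (ℝ → ℝ)) :
    coeff (R := ℝ → ℝ) n (D^[j] f) = deriv^[j] (coeff (R := ℝ → ℝ) n f) := by
  induction j with
  | zero => rfl
  | succ j ih =>
    rw [Function.iterate_succ_apply', Function.iterate_succ_apply']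
    show coeff (R := ℝ → ℝ) n (PowerSeries.mk _) = _
    rw [coeff_mk, ih]

lemma aux_deriv_iter_zero (j : ℕ) : deriv^[j] (0 : ℝ → ℝ) = 0 :=
  Function.iterate_fixed (by funext x; rw [show (0:ℝ→ℝ) = fun _ => (0:ℝ) from rfl, deriv_const]) j

/-- Constraints on the even part `γ₋` of the Lagrange–Bürmann expansion
`γ(N) = ∑_{k≥1}(1/k!)((½)∂)^{k−1}[𝒫(N)]^k`, where
`γ₊ = ∑_{k≥0}(1/(2k+1)!)((½)∂)^{2k}[𝒫]^{2k+1}` and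
`γ₋ = ∑_{k≥1}(1/(2k)!)((½)∂)^{2k−1}[𝒫]^{2k}`: order by order in the coupling,
`γ₋,₁ = 0`, `γ₋,₂ = ¼(γ₊,₁²)′`, `γ₋,₃ = ½(γ₊,₁γ₊,₂)′`, and
`γ₋,₄ = ¼(γ₊,₂² + 2γ₊,₁γ₊,₃)′ + (1/48)(−γ₊,₁(γ₊,₁³)″ + ¼(γ₊,₁⁴)″)′`. -/
theorem stmt_17 (γ γp γm P : PowerSeries (ℝ → ℝ))
    (hP0 : PowerSeries.coeff (R := ℝ → ℝ) 0 P = 0)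
    (hsmooth : ∀ n, ContDiff ℝ (⊤ : ℕ∞) (PowerSeries.coeff (R := ℝ → ℝ) n P))
    (hγ : ∀ m, PowerSeries.coeff (R := ℝ → ℝ) m γ
        = ∑ k ∈ Finset.Icc 1 m,
            ((1 : ℝ) / (Nat.factorial k) * ((1 : ℝ) / 2) ^ (k - 1))
              • PowerSeries.coeff (R := ℝ → ℝ) m (D^[k - 1] (P ^ k)))
    (hγp : ∀ m, PowerSeries.coeff (R := ℝ → ℝ) m γp
        = ∑ k ∈ Finset.range (m + 1),
            ((1 : ℝ) / (Nat.factorial (2 * k + 1)) * ((1 : ℝ) / 2) ^ (2 * k))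
              • PowerSeries.coeff (R := ℝ → ℝ) m (D^[2 * k] (P ^ (2 * k + 1))))
    (hγm : ∀ m, PowerSeries.coeff (R := ℝ → ℝ) m γm
        = ∑ k ∈ Finset.Icc 1 m,
            ((1 : ℝ) / (Nat.factorial (2 * k)) * ((1 : ℝ) / 2) ^ (2 * k - 1))
              • PowerSeries.coeff (R := ℝ → ℝ) m (D^[2 * k - 1] (P ^ (2 * k))))
    (hdecomp : γ = γp + γm) :
    (PowerSeries.coeff (R := ℝ → ℝ) 1 γm = 0)
    ∧ (PowerSeries.coeff (R := ℝ → ℝ) 2 γm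
        = fun x => (1 / 4) * deriv (fun y => (PowerSeries.coeff (R := ℝ → ℝ) 1 γp) y ^ 2) x)
    ∧ (PowerSeries.coeff (R := ℝ → ℝ) 3 γm
        = fun x => (1 / 2) * deriv (fun y =>
            (PowerSeries.coeff (R := ℝ → ℝ) 1 γp) y * (PowerSeries.coeff (R := ℝ → ℝ) 2 γp) y) x)
    ∧ (PowerSeries.coeff (R := ℝ → ℝ) 4 γm
        = fun x => (1 / 4) * deriv (fun y =>
              (PowerSeries.coeff (R := ℝ → ℝ) 2 γp) y ^ 2
                + 2 * (PowerSeries.coeff (R := ℝ → ℝ) 1 γp) y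
                    * (PowerSeries.coeff (R := ℝ → ℝ) 3 γp) y) x
          + (1 / 48) * deriv (fun y =>
              -((PowerSeries.coeff (R := ℝ → ℝ) 1 γp) y)
                  * deriv (deriv (fun z => (PowerSeries.coeff (R := ℝ → ℝ) 1 γp) z ^ 3)) y
                + (1 / 4)
                  * deriv (deriv (fun z => (PowerSeries.coeff (R := ℝ → ℝ) 1 γp) z ^ 4)) y) x) := by
  
  clear hγ hdecomp
  have hone : (1 : WithTop ℕ∞) ≤ ((⊤:ℕ∞) : WithTop ℕ∞) := by exact_mod_cast le_top
  have hXdvd : X ∣ P := X_dvd_iff.mpr (by simpa using hP0)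
  have hzero : ∀ (j m k : ℕ), m < k → coeff (R := ℝ → ℝ) m (D^[j] (P ^ k)) = 0 := by
    intro j m k hmk
    rw [aux_coeff_D_iter, X_pow_dvd_iff.mp (pow_dvd_pow_of_dvd hXdvd k) m hmk,
      aux_deriv_iter_zero]
  obtain ⟨Q, hQ⟩ := hXdvd
  have hq : ∀ n, coeff (R := ℝ → ℝ) n Q = coeff (R := ℝ → ℝ) (n+1) P := by
    intro n; rw [hQ, coeff_succ_X_mul]
  have hpow : ∀ (d k : ℕ), coeff (R := ℝ → ℝ) (d + k) (P ^ k) = coeff (R := ℝ → ℝ) d (Q ^ k) := by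
    intro d k; rw [hQ, mul_pow, coeff_X_pow_mul]
  have h0pow : ∀ k, coeff (R := ℝ → ℝ) 0 (Q ^ k) = (coeff (R := ℝ → ℝ) 1 P) ^ k := by
    intro k
    rw [coeff_zero_eq_constantCoeff, map_pow, ← coeff_zero_eq_constantCoeff, hq]
  have hQ2 : ∀ m, coeff (R := ℝ → ℝ) m (Q ^ 2)
      = ∑ i ∈ Finset.range (m + 1), coeff (R := ℝ → ℝ) i Q * coeff (R := ℝ → ℝ) (m - i) Q := by
    intro m
    rw [pow_two, coeff_mul, Finset.Nat.sum_antidiagonal_eq_sum_range_succ_mk]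
  set p1 := coeff (R := ℝ → ℝ) 1 P with hp1def
  set p2 := coeff (R := ℝ → ℝ) 2 P with hp2def
  set p3 := coeff (R := ℝ → ℝ) 3 P with hp3def
  -- γp coefficients
  have hgp1 : coeff (R := ℝ → ℝ) 1 γp = p1 := by
    rw [hγp 1, Finset.sum_range_succ, Finset.sum_range_one,
      hzero (2*1) 1 (2*1+1) (by norm_num), smul_zero, add_zero]
    norm_num
    rfl
  have hgp2 : coeff (R := ℝ → ℝ) 2 γp = p2 := by
    rw [hγp 2, Finset.sum_range_succ, Finset.sum_range_succ, Finset.sum_range_one,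
      hzero (2*1) 2 (2*1+1) (by norm_num), hzero (2*2) 2 (2*2+1) (by norm_num),
      smul_zero, smul_zero, add_zero, add_zero]
    norm_num
    rfl
  have hB3 : coeff (R := ℝ → ℝ) 3 (P ^ 3) = p1 ^ 3 := by
    rw [show (3:ℕ) = 0 + 3 from rfl, hpow, h0pow]
  have hgp3 : coeff (R := ℝ → ℝ) 3 γp = p3 + (24⁻¹ : ℝ) • deriv^[2] (p1 ^ 3) := by
    rw [hγp 3, Finset.sum_range_succ, Finset.sum_range_succ, Finset.sum_range_succ,
      Finset.sum_range_one,
      hzero (2*2) 3 (2*2+1) (by norm_num), hzero (2*3) 3 (2*3+1) (by norm_num),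
      smul_zero, smul_zero, add_zero, add_zero,
      aux_coeff_D_iter (2*1) 3 (P ^ (2*1+1)),
      show P ^ (2*1+1) = P ^ 3 from by norm_num, hB3,
      show (2*1 : ℕ) = 2 from rfl]
    congr 1
    · norm_num
      rfl
    · congr 1
      norm_num [Nat.factorial]
  refine ⟨?_, ?_, ?_, ?_⟩
  -- order 1
  · rw [hγm 1, Finset.Icc_self, Finset.sum_singleton,
      hzero (2*1-1) 1 (2*1) (by norm_num), smul_zero]
  -- order 2
  · have hA2 : coeff (R := ℝ → ℝ) 2 (P ^ 2) = p1 ^ 2 := by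
      rw [show (2:ℕ) = 0 + 2 from rfl, hpow, h0pow]
    rw [hγm 2, Finset.sum_Icc_succ_top (by norm_num), Finset.Icc_self, Finset.sum_singleton,
      hzero (2*2-1) 2 (2*2) (by norm_num), smul_zero, add_zero,
      aux_coeff_D_iter (2*1-1) 2 (P ^ (2*1)),
      show P ^ (2*1) = P ^ 2 from by norm_num, hA2,
      show (2*1-1 : ℕ) = 1 from rfl, Function.iterate_one]
    funext x
    rw [hgp1, show (fun y => p1 y ^ 2) = p1 ^ 2 from by funext y; simp]
    simp only [Pi.smul_apply, smul_eq_mul]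
    norm_num [Nat.factorial]
  -- order 3
  · have hA3 : coeff (R := ℝ → ℝ) 3 (P ^ 2) = fun y => 2 * (p1 y * p2 y) := by
      rw [show (3:ℕ) = 1 + 2 from rfl, hpow, hQ2]
      funext y
      simp [Finset.sum_range_succ, hq]
      ring
    rw [hγm 3, Finset.sum_Icc_succ_top (by norm_num), Finset.sum_Icc_succ_top (by norm_num),
      Finset.Icc_self, Finset.sum_singleton,
      hzero (2*2-1) 3 (2*2) (by norm_num), hzero (2*3-1) 3 (2*3) (by norm_num),
      smul_zero, smul_zero, add_zero, add_zero,
      aux_coeff_D_iter (2*1-1) 3 (P ^ (2*1)),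
      show P ^ (2*1) = P ^ 2 from by norm_num, hA3,
      show (2*1-1 : ℕ) = 1 from rfl, Function.iterate_one]
    funext x
    rw [hgp1, hgp2]
    have hd : DifferentiableAt ℝ (fun y => p1 y * p2 y) x :=
      (((hsmooth 1).mul (hsmooth 2)).differentiable (by simp)).differentiableAt
    simp only [Pi.smul_apply, smul_eq_mul]
    rw [deriv_const_mul 2 hd]
    norm_num [Nat.factorial]
    ring
  -- order 4
  · have hA4 : coeff (R := ℝ → ℝ) 4 (P ^ 2)
        = fun y => p1 y * p3 y + p2 y * p2 y + p3 y * p1 y := by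
      rw [show (4:ℕ) = 2 + 2 from rfl, hpow, hQ2]
      funext y
      simp [Finset.sum_range_succ, hq]
      rfl
    have hC4 : coeff (R := ℝ → ℝ) 4 (P ^ 4) = p1 ^ 4 := by
      rw [show (4:ℕ) = 0 + 4 from rfl, hpow, h0pow]
    rw [hγm 4, Finset.sum_Icc_succ_top (by norm_num), Finset.sum_Icc_succ_top (by norm_num),
      Finset.sum_Icc_succ_top (by norm_num), Finset.Icc_self, Finset.sum_singleton,
      hzero (2*3-1) 4 (2*3) (by norm_num), hzero (2*4-1) 4 (2*4) (by norm_num),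
      smul_zero, smul_zero, add_zero, add_zero,
      aux_coeff_D_iter (2*1-1) 4 (P ^ (2*1)),
      aux_coeff_D_iter (2*2-1) 4 (P ^ (2*2)),
      show P ^ (2*1) = P ^ 2 from by norm_num,
      show P ^ (2*2) = P ^ 4 from by norm_num, hA4, hC4,
      show (2*1-1 : ℕ) = 1 from rfl, show (2*2-1 : ℕ) = 3 from rfl, Function.iterate_one]
    funext x
    rw [hgp1, hgp2, hgp3]
    have s1 : ContDiff ℝ ((⊤:ℕ∞) : WithTop ℕ∞) p1 := (hsmooth 1).of_le (by simp)
    have s2 : ContDiff ℝ ((⊤:ℕ∞) : WithTop ℕ∞) p2 := (hsmooth 2).of_le (by simp)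
    have s3 : ContDiff ℝ ((⊤:ℕ∞) : WithTop ℕ∞) p3 := (hsmooth 3).of_le (by simp)
    have hu3 : (fun z => p1 z ^ 3) = p1 ^ 3 := by funext z; simp
    have hu4 : (fun z => p1 z ^ 4) = p1 ^ 4 := by funext z; simp
    have s13 : ContDiff ℝ ((⊤:ℕ∞) : WithTop ℕ∞) (p1 ^ 3) := s1.pow 3
    have s14 : ContDiff ℝ ((⊤:ℕ∞) : WithTop ℕ∞) (p1 ^ 4) := s1.pow 4
    have sS3 : ContDiff ℝ ((⊤:ℕ∞) : WithTop ℕ∞) (deriv^[2] (p1 ^ 3)) := s13.iterate_deriv 2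
    have sS4 : ContDiff ℝ ((⊤:ℕ∞) : WithTop ℕ∞) (deriv^[2] (p1 ^ 4)) := s14.iterate_deriv 2
    set S3 : ℝ → ℝ := deriv^[2] (p1 ^ 3) with hS3def
    set S4 : ℝ → ℝ := deriv^[2] (p1 ^ 4) with hS4def
    have hdd3 : deriv (deriv (p1 ^ 3)) = S3 := by
      rw [hS3def, Function.iterate_succ_apply', Function.iterate_one]
    have hdd4 : deriv (deriv (p1 ^ 4)) = S4 := by
      rw [hS4def, Function.iterate_succ_apply', Function.iterate_one]
    have hF : DifferentiableAt ℝ (fun y => p1 y * p3 y + p2 y * p2 y + p3 y * p1 y) x :=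
      ((((s1.mul s3).add (s2.mul s2)).add (s3.mul s1)).differentiable (by simp)).differentiableAt
    have hG : DifferentiableAt ℝ (fun y => p1 y * S3 y) x :=
      ((s1.mul sS3).differentiable (by simp)).differentiableAt
    have hS4d : DifferentiableAt ℝ S4 x := (sS4.differentiable (by simp)).differentiableAt
    have hrhs1 : (fun y => p2 y ^ 2 + 2 * p1 y * ((p3 + (24⁻¹ : ℝ) • S3) y))
        = fun y => (p1 y * p3 y + p2 y * p2 y + p3 y * p1 y) + (1/12 : ℝ) * (p1 y * S3 y) := by
      funext y
      simp only [Pi.add_apply, Pi.smul_apply, smul_eq_mul]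
      ring
    have hrhs2 : (fun y => -(p1 y) * deriv (deriv (fun z => p1 z ^ 3)) y
          + (1/4 : ℝ) * deriv (deriv (fun z => p1 z ^ 4)) y)
        = fun y => -(p1 y * S3 y) + (1/4 : ℝ) * S4 y := by
      funext y
      rw [hu3, hu4, hdd3, hdd4]
      ring
    rw [hrhs1, hrhs2]
    have e1 : deriv (fun y => (p1 y * p3 y + p2 y * p2 y + p3 y * p1 y)
          + (1/12 : ℝ) * (p1 y * S3 y)) x
        = deriv (fun y => p1 y * p3 y + p2 y * p2 y + p3 y * p1 y) x
          + (1/12 : ℝ) * deriv (fun y => p1 y * S3 y) x := by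
      rw [deriv_fun_add hF (hG.const_mul _), deriv_const_mul _ hG]
    have e2 : deriv (fun y => -(p1 y * S3 y) + (1/4 : ℝ) * S4 y) x
        = -deriv (fun y => p1 y * S3 y) x + (1/4 : ℝ) * deriv S4 x := by
      rw [deriv_fun_add (f := fun y => -(p1 y * S3 y)) hG.neg (hS4d.const_mul _), deriv_const_mul _ hS4d, deriv.fun_neg]
    rw [e1, e2]
    have e3 : deriv^[3] (p1 ^ 4) = deriv S4 := by
      rw [hS4def]
      exact Function.iterate_succ_apply' deriv 2 (p1 ^ 4)
    simp only [Pi.add_apply, Pi.smul_apply, smul_eq_mul]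
    rw [e3]
    norm_num [Nat.factorial]
    ring
end
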